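/- (L¹ bound between an interpolated graph transformer and the manifold transformer.) Let μ be a Borel probability measure on X, let x_1, …, x_N ∈ X, and let V_1, …, V_N be pairwise disjoint Borel sets whose union is X, with V_j contained in the closed ball of radius r > 0 centered at x_j and μ(V_j) = 1/N for every j. Assume ‖f(x)‖ ≤ 1 for all x ∈ X, let X_1, …, X_N ∈ ℝ^D satisfy ‖X_j − f(x_j)‖ ≤ Δ and ‖X_j‖ ≤ 1 for all j, and let M ≥ 0 satisfy |⟨Q X_i, K X_j⟩| ≤ M for all i, j and |⟨Q f(u), K f(v)⟩| ≤ M for all u, v ∈ X. Define the piecewise-constant interpolation (I_N Φ_G)(x) = Φ_G(j) for x ∈ V_j, and set Δ_Φ = (C_V + 4·exp(2M)·C_Q·C_K·C_V)·Δ + (exp(M)·C_V + 2·exp(2M)·C_Q·C_K·C_V)·r. Then ∫_X ‖(I_N Φ_G)(x) − Φ_M(x)‖ dμ(x) ≤ Δ_Φ + 2·exp(2M)·C_Q·C_K·C_V·r. -/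

import Mathlib

/-!
Fix `y` in the cell `P j`. Since every cell has mass `1/N`, the graph attention at `j` is the
softmax average of `V (X_k)` with weights `exp ⟪Q X_j, K X_k⟫` against the cell masses `μ (P k)`,
while the manifold attention at `y` is the softmax average of `V (f z)` with weights
`exp ⟪Q f(y), K f(z)⟫` against `μ`. On `P k` both the values and the scores differ by
`O(Δ + r)`, because `f` is 1-Lipschitz and `P k` lies in the ball of radius `r` around `x k`;
all scores are bounded by `M`, so the weights are pinched between `exp (-M)` and `exp M`, the
exponential is `exp M`-Lipschitz on the relevant range, and comparing two normalised averages
costs a factor `exp M` from the lower bound on the normaliser. This gives the pointwise bound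
`(C_V + 4 exp (2M) C_Q C_K C_V) (Δ + r)`, which integrates against the probability measure `μ`.
-/

open MeasureTheory Real
open scoped RealInnerProductSpace BigOperators

lemma abs_exp_sub_exp_le_of_le {x y M : ℝ} (hx : x ≤ M) (hy : y ≤ M) :
    |exp x - exp y| ≤ exp M * |x - y| := by
  wlog hyx : y ≤ x generalizing x y
  · rw [abs_sub_comm, abs_sub_comm x]
    exact this hy hx (le_of_not_ge hyx)
  have hexp : exp x - exp y ≤ exp x * (x - y) := by
    have h1 := add_one_le_exp (y - x)
    have h2 : exp y = exp x * exp (y - x) := by rw [← exp_add, add_sub_cancel]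
    nlinarith [exp_pos x]
  rw [abs_of_nonneg (sub_nonneg.2 (exp_le_exp.2 hyx)), abs_of_nonneg (sub_nonneg.2 hyx)]
  exact hexp.trans (mul_le_mul_of_nonneg_right (exp_le_exp.2 hx) (sub_nonneg.2 hyx))

lemma abs_inner_map_sub_inner_map_le {E : Type*} [NormedAddCommGroup E] [InnerProductSpace ℝ E]
    {Q K : E →ₗ[ℝ] E} {C_Q C_K : ℝ} (hQ : ∀ u, ‖Q u‖ ≤ C_Q * ‖u‖) (hK : ∀ u, ‖K u‖ ≤ C_K * ‖u‖)
    (u u' v v' : E) :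
    |⟪Q u, K v⟫ - ⟪Q u', K v'⟫| ≤ C_Q * C_K * (‖u - u'‖ * ‖v‖ + ‖u'‖ * ‖v - v'‖) := by
  have hbound (a b : E) : |⟪Q a, K b⟫| ≤ C_Q * C_K * (‖a‖ * ‖b‖) :=
    calc |⟪Q a, K b⟫| ≤ ‖Q a‖ * ‖K b‖ := abs_real_inner_le_norm _ _
      _ ≤ (C_Q * ‖a‖) * (C_K * ‖b‖) :=
        mul_le_mul (hQ a) (hK b) (norm_nonneg _) ((norm_nonneg _).trans (hQ a))
      _ = C_Q * C_K * (‖a‖ * ‖b‖) := by ring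
  calc |⟪Q u, K v⟫ - ⟪Q u', K v'⟫| = |⟪Q (u - u'), K v⟫ + ⟪Q u', K (v - v')⟫| := by
        simp only [map_sub, inner_sub_left, inner_sub_right]; ring_nf
    _ ≤ |⟪Q (u - u'), K v⟫| + |⟪Q u', K (v - v')⟫| := abs_add_le _ _
    _ ≤ C_Q * C_K * (‖u - u'‖ * ‖v‖ + ‖u'‖ * ‖v - v'‖) := by
        rw [mul_add]; exact add_le_add (hbound _ _) (hbound _ _)

lemma abs_exp_inner_map_sub_exp_inner_map_le {E : Type*} [NormedAddCommGroup E]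
    [InnerProductSpace ℝ E] {Q K : E →ₗ[ℝ] E} {C_Q C_K M ρ : ℝ} (hCQ : 0 ≤ C_Q) (hCK : 0 ≤ C_K)
    (hQ : ∀ u, ‖Q u‖ ≤ C_Q * ‖u‖) (hK : ∀ u, ‖K u‖ ≤ C_K * ‖u‖) {u u' v v' : E}
    (hu : ‖u - u'‖ ≤ ρ) (hv : ‖v - v'‖ ≤ ρ) (hv1 : ‖v‖ ≤ 1) (hu'1 : ‖u'‖ ≤ 1)
    (hM : |⟪Q u, K v⟫| ≤ M) (hM' : |⟪Q u', K v'⟫| ≤ M) :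
    |exp ⟪Q u, K v⟫ - exp ⟪Q u', K v'⟫| ≤ exp M * (2 * C_Q * C_K * ρ) := by
  refine (abs_exp_sub_exp_le_of_le (le_of_abs_le hM) (le_of_abs_le hM')).trans ?_
  gcongr
  refine (abs_inner_map_sub_inner_map_le hQ hK u u' v v').trans ?_
  have hCQK : 0 ≤ C_Q * C_K := mul_nonneg hCQ hCK
  calc C_Q * C_K * (‖u - u'‖ * ‖v‖ + ‖u'‖ * ‖v - v'‖) ≤ C_Q * C_K * (ρ * 1 + 1 * ρ) := by
        gcongr
        exact (norm_nonneg _).trans hu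
    _ = 2 * C_Q * C_K * ρ := by ring

lemma norm_inv_smul_sub_inv_smul_le {E : Type*} [NormedAddCommGroup E] [NormedSpace ℝ E]
    {s t C η δ : ℝ} {A B : E} (hs : 0 < s) (ht : 0 < t) (hB : ‖B‖ ≤ C * t)
    (hAB : ‖A - B‖ ≤ η) (hst : |s - t| ≤ δ) :
    ‖s⁻¹ • A - t⁻¹ • B‖ ≤ (η + C * δ) / s := by
  have hsplit : s⁻¹ • A - t⁻¹ • B = s⁻¹ • (A - B) + (s⁻¹ - t⁻¹) • B := by
    rw [smul_sub, sub_smul]; abel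
  have hcoef : |s⁻¹ - t⁻¹| = |s - t| / (s * t) := by
    rw [inv_sub_inv hs.ne' ht.ne', abs_div, abs_sub_comm, abs_of_pos (mul_pos hs ht)]
  have hδ : 0 ≤ δ := (abs_nonneg _).trans hst
  calc ‖s⁻¹ • A - t⁻¹ • B‖ ≤ s⁻¹ * ‖A - B‖ + |s⁻¹ - t⁻¹| * ‖B‖ := by
        rw [hsplit]
        refine (norm_add_le _ _).trans_eq ?_
        rw [norm_smul, norm_smul, Real.norm_eq_abs, Real.norm_eq_abs, abs_of_pos (inv_pos.2 hs)]
    _ ≤ s⁻¹ * η + δ / (s * t) * (C * t) := by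
        rw [hcoef]
        gcongr
    _ = (η + C * δ) / s := by field_simp

section

variable {X : Type*} [MeasurableSpace X] {μ : Measure X}

lemma norm_sum_measureReal_smul_sub_integral_le {ι E : Type*} [Fintype ι] [NormedAddCommGroup E]
    [NormedSpace ℝ E] [CompleteSpace E] [IsFiniteMeasure μ] {P : ι → Set X}
    (hPmeas : ∀ k, MeasurableSet (P k)) (hPdisj : Pairwise fun j k => Disjoint (P j) (P k))
    (hPcover : ⋃ k, P k = Set.univ) {F : X → E} (hF : Integrable F μ) {c : ι → E} {e : ι → ℝ}
    (hcF : ∀ k, ∀ z ∈ P k, ‖c k - F z‖ ≤ e k) :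
    ‖∑ k, μ.real (P k) • c k - ∫ z, F z ∂μ‖ ≤ ∑ k, μ.real (P k) * e k := by
  have hsplit : ∫ z, F z ∂μ = ∑ k, ∫ z in P k, F z ∂μ := by
    rw [← setIntegral_univ, ← hPcover,
      integral_iUnion_fintype hPmeas hPdisj fun k => hF.integrableOn]
  have hcell (k : ι) : μ.real (P k) • c k - ∫ z in P k, F z ∂μ = ∫ z in P k, (c k - F z) ∂μ := by
    rw [integral_sub (integrable_const (c k)) hF.integrableOn, setIntegral_const]
  rw [hsplit, ← Finset.sum_sub_distrib]
  refine (norm_sum_le _ _).trans (Finset.sum_le_sum fun k _ => ?_)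
  rw [hcell, mul_comm]
  exact norm_setIntegral_le_of_norm_le_const (measure_lt_top μ _) (hcF k)

lemma norm_sum_softmax_sub_integral_softmax_le {ι E : Type*} [Fintype ι] [NormedAddCommGroup E]
    [NormedSpace ℝ E] [CompleteSpace E] [IsProbabilityMeasure μ] {P : ι → Set X}
    (hPmeas : ∀ k, MeasurableSet (P k)) (hPdisj : Pairwise fun j k => Disjoint (P j) (P k))
    (hPcover : ⋃ k, P k = Set.univ) {b : ι → ℝ} {u : ι → E} {a : X → ℝ} {v : X → E}
    (ha : Integrable a μ) (hav : Integrable (fun z => a z • v z) μ) {ℓ C ε δ : ℝ} (hℓ : 0 < ℓ)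
    (hbℓ : ∀ k, ℓ ≤ b k) (haℓ : ∀ z, ℓ ≤ a z) (hv : ∀ z, ‖v z‖ ≤ C)
    (hba : ∀ k, ∀ z ∈ P k, |b k - a z| ≤ δ) (huv : ∀ k, ∀ z ∈ P k, ‖u k - v z‖ ≤ ε) :
    ‖(∑ k, μ.real (P k) * b k)⁻¹ • ∑ k, μ.real (P k) • b k • u k -
        (∫ z, a z ∂μ)⁻¹ • ∫ z, a z • v z ∂μ‖ ≤ ε + 2 * C * δ / ℓ := by
  set s := ∑ k, μ.real (P k) * b k
  set t := ∫ z, a z ∂μ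
  obtain ⟨z₀⟩ := nonempty_of_isProbabilityMeasure μ
  obtain ⟨k₀, hz₀⟩ := Set.mem_iUnion.1 (hPcover ▸ Set.mem_univ z₀)
  have hCδ : 0 ≤ C * δ :=
    mul_nonneg ((norm_nonneg _).trans (hv z₀)) ((abs_nonneg _).trans (hba k₀ z₀ hz₀))
  have hmass : ∑ k, μ.real (P k) = 1 := by
    rw [← measureReal_iUnion_fintype hPdisj hPmeas, hPcover, probReal_univ]
  have hs : ℓ ≤ s := calc
    ℓ = ∑ k, μ.real (P k) * ℓ := by rw [← Finset.sum_mul, hmass, one_mul]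
    _ ≤ s := Finset.sum_le_sum fun k _ => mul_le_mul_of_nonneg_left (hbℓ k) measureReal_nonneg
  have ht : ℓ ≤ t := by
    simpa using integral_mono (integrable_const ℓ) ha haℓ
  have hB : ‖∫ z, a z • v z ∂μ‖ ≤ C * t := calc
    ‖∫ z, a z • v z ∂μ‖ ≤ ∫ z, C * a z ∂μ := by
      refine norm_integral_le_of_norm_le (ha.const_mul C) (ae_of_all _ fun z => ?_)
      rw [norm_smul, Real.norm_of_nonneg (hℓ.le.trans (haℓ z)), mul_comm]
      exact mul_le_mul_of_nonneg_right (hv z) (hℓ.le.trans (haℓ z))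
    _ = C * t := integral_const_mul C a
  have hAB : ‖∑ k, μ.real (P k) • b k • u k - ∫ z, a z • v z ∂μ‖ ≤ s * ε + C * δ := calc
    _ ≤ ∑ k, μ.real (P k) * (b k * ε + C * δ) := by
      refine norm_sum_measureReal_smul_sub_integral_le hPmeas hPdisj hPcover hav fun k z hz => ?_
      have hb : 0 ≤ b k := hℓ.le.trans (hbℓ k)
      calc ‖b k • u k - a z • v z‖ = ‖b k • (u k - v z) + (b k - a z) • v z‖ := by
            rw [smul_sub, sub_smul, sub_add_sub_cancel]
        _ ≤ b k * ε + δ * C := by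
          refine (norm_add_le _ _).trans (add_le_add ?_ ?_) <;> rw [norm_smul, Real.norm_eq_abs]
          · rw [abs_of_nonneg hb]; exact mul_le_mul_of_nonneg_left (huv k z hz) hb
          · exact mul_le_mul (hba k z hz) (hv z) (norm_nonneg _) ((abs_nonneg _).trans (hba k z hz))
        _ = b k * ε + C * δ := by ring
    _ = s * ε + C * δ := by
      simp only [s, mul_add, ← mul_assoc, Finset.sum_add_distrib, ← Finset.sum_mul, hmass, one_mul]
  have hst : |s - t| ≤ δ := by
    have := norm_sum_measureReal_smul_sub_integral_le (c := b) (e := fun _ => δ)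
      hPmeas hPdisj hPcover ha fun k z hz => hba k z hz
    simpa [← Finset.sum_mul, hmass] using this
  have hs₀ : 0 < s := hℓ.trans_le hs
  calc _ ≤ (s * ε + C * δ + C * δ) / s :=
        norm_inv_smul_sub_inv_smul_le hs₀ (hℓ.trans_le ht) hB hAB hst
    _ = ε + 2 * (C * δ) / s := by field_simp; ring
    _ ≤ ε + 2 * (C * δ) / ℓ := by gcongr
    _ = ε + 2 * C * δ / ℓ := by ring

section Attention

variable {E : Type*} [NormedAddCommGroup E] [InnerProductSpace ℝ E]

noncomputable def graphAttention {N : ℕ} (Q K V : E →ₗ[ℝ] E) (Xv : Fin N → E) (j : Fin N) : E :=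
  (∑ k, exp ⟪Q (Xv j), K (Xv k)⟫)⁻¹ • ∑ k, exp ⟪Q (Xv j), K (Xv k)⟫ • V (Xv k)

noncomputable def manifoldAttention (μ : Measure X) (Q K V : E →ₗ[ℝ] E) (f : X → E) (y : X) : E :=
  (∫ z, exp ⟪Q (f y), K (f z)⟫ ∂μ)⁻¹ • ∫ z, exp ⟪Q (f y), K (f z)⟫ • V (f z) ∂μ

lemma graphAttention_eq_measureReal_weighted {N : ℕ} {P : Fin N → Set X}
    (hPmass : ∀ k, μ (P k) = (N : ENNReal)⁻¹) (Q K V : E →ₗ[ℝ] E) (Xv : Fin N → E) (j : Fin N) :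
    graphAttention Q K V Xv j =
      (∑ k, μ.real (P k) * exp ⟪Q (Xv j), K (Xv k)⟫)⁻¹ •
        ∑ k, μ.real (P k) • exp ⟪Q (Xv j), K (Xv k)⟫ • V (Xv k) := by
  have hN : (N : ℝ)⁻¹ ≠ 0 := inv_ne_zero (Nat.cast_ne_zero.2 j.pos.ne')
  have hcell (k : Fin N) : μ.real (P k) = (N : ℝ)⁻¹ := by simp [measureReal_def, hPmass]
  simp only [hcell]
  rw [← Finset.mul_sum, ← Finset.smul_sum, mul_inv_rev, mul_smul, inv_smul_smul₀ hN]
  rfl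

variable [FiniteDimensional ℝ E] [PseudoMetricSpace X] [BorelSpace X]

lemma norm_graphAttention_sub_manifoldAttention_le [IsProbabilityMeasure μ]
    {Q K V : E →ₗ[ℝ] E} {C_Q C_K C_V : ℝ} (hCQ : 0 ≤ C_Q) (hCK : 0 ≤ C_K) (hCV : 0 ≤ C_V)
    (hQ : ∀ u, ‖Q u‖ ≤ C_Q * ‖u‖) (hK : ∀ u, ‖K u‖ ≤ C_K * ‖u‖) (hV : ∀ u, ‖V u‖ ≤ C_V * ‖u‖)
    {f : X → E} (hfLip : ∀ a b, ‖f a - f b‖ ≤ dist a b) (hf1 : ∀ a, ‖f a‖ ≤ 1)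
    {N : ℕ} {x : Fin N → X} {P : Fin N → Set X} {r Δ M : ℝ}
    (hPmeas : ∀ j, MeasurableSet (P j)) (hPdisj : Pairwise fun j k => Disjoint (P j) (P k))
    (hPcover : ⋃ j, P j = Set.univ) (hPball : ∀ j, P j ⊆ Metric.closedBall (x j) r)
    (hPmass : ∀ j, μ (P j) = (N : ENNReal)⁻¹)
    {Xv : Fin N → E} (hXv : ∀ j, ‖Xv j - f (x j)‖ ≤ Δ) (hXv1 : ∀ j, ‖Xv j‖ ≤ 1)
    (hM1 : ∀ i j, |⟪Q (Xv i), K (Xv j)⟫| ≤ M) (hM2 : ∀ u v, |⟪Q (f u), K (f v)⟫| ≤ M)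
    {j : Fin N} {y : X} (hy : y ∈ P j) :
    ‖graphAttention Q K V Xv j - manifoldAttention μ Q K V f y‖ ≤
      (C_V + 4 * exp (2 * M) * C_Q * C_K * C_V) * (Δ + r) := by
  have hnear (k : Fin N) (z : X) (hz : z ∈ P k) : ‖Xv k - f z‖ ≤ Δ + r := calc
    ‖Xv k - f z‖ ≤ ‖Xv k - f (x k)‖ + ‖f (x k) - f z‖ := norm_sub_le_norm_sub_add_norm_sub _ _ _
    _ ≤ Δ + r := add_le_add (hXv k) ((hfLip _ _).trans (dist_comm z (x k) ▸ hPball k hz))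
  have hfc : Continuous f := LipschitzWith.continuous (K := 1) <|
    LipschitzWith.of_dist_le_mul fun a b => by simpa [dist_eq_norm] using hfLip a b
  have hac : Continuous fun z => exp ⟪Q (f y), K (f z)⟫ :=
    continuous_exp.comp (continuous_const.inner (K.continuous_of_finiteDimensional.comp hfc))
  have hexp_le (z : X) : exp ⟪Q (f y), K (f z)⟫ ≤ exp M := exp_le_exp.2 (le_of_abs_le (hM2 y z))
  have hv (z : X) : ‖V (f z)‖ ≤ C_V := (hV _).trans (mul_le_of_le_one_right hCV (hf1 z))
  have ha : Integrable (fun z => exp ⟪Q (f y), K (f z)⟫) μ :=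
    .of_bound hac.aestronglyMeasurable (exp M) <| ae_of_all _ fun z => by
      rw [Real.norm_of_nonneg (exp_pos _).le]; exact hexp_le z
  have hav : Integrable (fun z => exp ⟪Q (f y), K (f z)⟫ • V (f z)) μ :=
    .of_bound (hac.smul (V.continuous_of_finiteDimensional.comp hfc)).aestronglyMeasurable
      (exp M * C_V) <| ae_of_all _ fun z => by
        rw [norm_smul, Real.norm_of_nonneg (exp_pos _).le]
        exact mul_le_mul (hexp_le z) (hv z) (norm_nonneg _) (exp_pos _).le
  have hba (k : Fin N) (z : X) (hz : z ∈ P k) :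
      |exp ⟪Q (Xv j), K (Xv k)⟫ - exp ⟪Q (f y), K (f z)⟫| ≤ exp M * (2 * C_Q * C_K * (Δ + r)) :=
    abs_exp_inner_map_sub_exp_inner_map_le hCQ hCK hQ hK (hnear j y hy) (hnear k z hz) (hXv1 k)
      (hf1 y) (hM1 j k) (hM2 y z)
  have huv (k : Fin N) (z : X) (hz : z ∈ P k) : ‖V (Xv k) - V (f z)‖ ≤ C_V * (Δ + r) := by
    rw [← map_sub]
    exact (hV _).trans (mul_le_mul_of_nonneg_left (hnear k z hz) hCV)
  have hexp_ge {t : ℝ} (ht : |t| ≤ M) : (exp M)⁻¹ ≤ exp t := by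
    rw [← exp_neg]; exact exp_le_exp.2 (neg_le_of_abs_le ht)
  rw [graphAttention_eq_measureReal_weighted hPmass, manifoldAttention]
  refine (norm_sum_softmax_sub_integral_softmax_le hPmeas hPdisj hPcover ha hav
    (inv_pos.2 (exp_pos M)) (fun k => hexp_ge (hM1 j k)) (fun z => hexp_ge (hM2 y z)) hv hba
    huv).trans_eq ?_
  rw [two_mul M, exp_add]
  field_simp
  ring

end Attention

end

theorem interpolated_graph_transformer_L1_bound_general
    {D : ℕ} {X : Type*} [MetricSpace X] [MeasurableSpace X] [BorelSpace X]
    (μ : Measure X) [IsProbabilityMeasure μ]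
    (Q K V : EuclideanSpace ℝ (Fin D) →ₗ[ℝ] EuclideanSpace ℝ (Fin D))
    (C_Q C_K C_V Δ r : ℝ)
    (hCQ : 0 < C_Q) (hCK : 0 < C_K) (hCV : 0 < C_V) (hr : 0 < r)
    (hQ : ∀ u, ‖Q u‖ ≤ C_Q * ‖u‖) (hK : ∀ u, ‖K u‖ ≤ C_K * ‖u‖)
    (hV : ∀ u, ‖V u‖ ≤ C_V * ‖u‖)
    (f : X → EuclideanSpace ℝ (Fin D))
    (hfLip : ∀ a b, ‖f a - f b‖ ≤ dist a b)
    (hf1 : ∀ a : X, ‖f a‖ ≤ 1)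
    (N : ℕ) (x : Fin N → X) (P : Fin N → Set X)
    (hPmeas : ∀ j, MeasurableSet (P j))
    (hPdisj : Pairwise fun j k => Disjoint (P j) (P k))
    (hPcover : (⋃ j, P j) = Set.univ)
    (hPball : ∀ j, P j ⊆ Metric.closedBall (x j) r)
    (hPmass : ∀ j, μ (P j) = (N : ENNReal)⁻¹)
    (Xv : Fin N → EuclideanSpace ℝ (Fin D))
    (hXv : ∀ j, ‖Xv j - f (x j)‖ ≤ Δ) (hXv1 : ∀ j, ‖Xv j‖ ≤ 1)
    (M : ℝ) (hM0 : 0 ≤ M)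
    (hM1 : ∀ i j, abs ⟪Q (Xv i), K (Xv j)⟫ ≤ M)
    (hM2 : ∀ u v : X, abs ⟪Q (f u), K (f v)⟫ ≤ M)
    (g : X → EuclideanSpace ℝ (Fin D))
    (hg : ∀ j : Fin N, ∀ y ∈ P j,
      g y = (∑ k, Real.exp ⟪Q (Xv j), K (Xv k)⟫)⁻¹ •
              (∑ k, Real.exp ⟪Q (Xv j), K (Xv k)⟫ • V (Xv k)))
    (ΔΦ : ℝ)
    (hΔΦ : ΔΦ = (C_V + 4 * Real.exp (2 * M) * C_Q * C_K * C_V) * Δ +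
        (Real.exp M * C_V + 2 * Real.exp (2 * M) * C_Q * C_K * C_V) * r) :
    (∫ y, ‖g y -
        ((∫ z, Real.exp ⟪Q (f y), K (f z)⟫ ∂μ)⁻¹ •
          (∫ z, Real.exp ⟪Q (f y), K (f z)⟫ • V (f z) ∂μ))‖ ∂μ)
      ≤ ΔΦ + 2 * Real.exp (2 * M) * C_Q * C_K * C_V * r := by
  have hpoint (y : X) : ‖g y - manifoldAttention μ Q K V f y‖ ≤
      (C_V + 4 * exp (2 * M) * C_Q * C_K * C_V) * (Δ + r) := by
    obtain ⟨j, hy⟩ := Set.mem_iUnion.1 (hPcover ▸ Set.mem_univ y)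
    rw [hg j y hy]
    exact norm_graphAttention_sub_manifoldAttention_le hCQ.le hCK.le hCV.le hQ hK hV hfLip hf1
      hPmeas hPdisj hPcover hPball hPmass hXv hXv1 hM1 hM2 hy
  have hexp : C_V * r ≤ exp M * C_V * r := by
    nlinarith [one_le_exp hM0, mul_pos hCV hr]
  calc _ ≤ ∫ _ : X, (C_V + 4 * exp (2 * M) * C_Q * C_K * C_V) * (Δ + r) ∂μ :=
        integral_mono_of_nonneg (ae_of_all _ fun _ => norm_nonneg _) (integrable_const _)
          (ae_of_all _ hpoint)
    _ = (C_V + 4 * exp (2 * M) * C_Q * C_K * C_V) * (Δ + r) := by simp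
    _ ≤ ΔΦ + 2 * exp (2 * M) * C_Q * C_K * C_V * r := by rw [hΔΦ]; linarith

/-- L¹ bound between the interpolated graph transformer and the manifold
transformer: with `g` the piecewise-constant interpolation of the graph-transformer
outputs (`g x = Φ_G(j)` for `x ∈ P j`) and
`Δ_Φ = (C_V + 4·exp(2M)·C_Q·C_K·C_V)·Δ + (exp(M)·C_V + 2·exp(2M)·C_Q·C_K·C_V)·r`,
`∫ ‖g x − Φ_M x‖ dμ ≤ Δ_Φ + 2·exp(2M)·C_Q·C_K·C_V·r`. -/
theorem interpolated_graph_transformer_L1_bound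
    {D : ℕ} {X : Type*} [MetricSpace X] [MeasurableSpace X] [BorelSpace X]
    (μ : Measure X) [IsProbabilityMeasure μ]
    (Q K V : EuclideanSpace ℝ (Fin D) →ₗ[ℝ] EuclideanSpace ℝ (Fin D))
    (C_Q C_K C_V Δ r : ℝ)
    (hCQ : 0 < C_Q) (hCK : 0 < C_K) (hCV : 0 < C_V) (hΔ : 0 ≤ Δ) (hr : 0 < r)
    (hQ : ∀ u, ‖Q u‖ ≤ C_Q * ‖u‖) (hK : ∀ u, ‖K u‖ ≤ C_K * ‖u‖)
    (hV : ∀ u, ‖V u‖ ≤ C_V * ‖u‖)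
    (f : X → EuclideanSpace ℝ (Fin D))
    (hfLip : ∀ a b, ‖f a - f b‖ ≤ dist a b)
    (hf1 : ∀ a : X, ‖f a‖ ≤ 1)
    (N : ℕ) (x : Fin N → X) (P : Fin N → Set X)
    (hPmeas : ∀ j, MeasurableSet (P j))
    (hPdisj : Pairwise fun j k => Disjoint (P j) (P k))
    (hPcover : (⋃ j, P j) = Set.univ)
    (hPball : ∀ j, P j ⊆ Metric.closedBall (x j) r)
    (hPmass : ∀ j, μ (P j) = (N : ENNReal)⁻¹)
    (Xv : Fin N → EuclideanSpace ℝ (Fin D))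
    (hXv : ∀ j, ‖Xv j - f (x j)‖ ≤ Δ) (hXv1 : ∀ j, ‖Xv j‖ ≤ 1)
    (M : ℝ) (hM0 : 0 ≤ M)
    (hM1 : ∀ i j, abs ⟪Q (Xv i), K (Xv j)⟫ ≤ M)
    (hM2 : ∀ u v : X, abs ⟪Q (f u), K (f v)⟫ ≤ M)
    (g : X → EuclideanSpace ℝ (Fin D))
    (hg : ∀ j : Fin N, ∀ y ∈ P j,
      g y = (∑ k, Real.exp ⟪Q (Xv j), K (Xv k)⟫)⁻¹ •
              (∑ k, Real.exp ⟪Q (Xv j), K (Xv k)⟫ • V (Xv k)))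
    (ΔΦ : ℝ)
    (hΔΦ : ΔΦ = (C_V + 4 * Real.exp (2 * M) * C_Q * C_K * C_V) * Δ +
        (Real.exp M * C_V + 2 * Real.exp (2 * M) * C_Q * C_K * C_V) * r) :
    (∫ y, ‖g y -
        ((∫ z, Real.exp ⟪Q (f y), K (f z)⟫ ∂μ)⁻¹ •
          (∫ z, Real.exp ⟪Q (f y), K (f z)⟫ • V (f z) ∂μ))‖ ∂μ)
      ≤ ΔΦ + 2 * Real.exp (2 * M) * C_Q * C_K * C_V * r :=
  interpolated_graph_transformer_L1_bound_general μ Q K V C_Q C_K C_V Δ r hCQ hCK hCV hr hQ hK hV f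
    hfLip hf1 N x P hPmeas hPdisj hPcover hPball hPmass Xv hXv hXv1 M hM0 hM1 hM2 g hg ΔΦ hΔΦ
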